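/- Let t ≠ {∅} be a full binary tree, let u = u_1…u_ℓ be the lexicographically maximal vertex of t with S_u(t) = S(t), and for 1 ≤ j ≤ ℓ set v_j = 3 − u_j and t_j^spn = θ_{u_1…u_{j−1}v_j} t. Then the set {v ∈ t : S_v(t) = S(t)} is exactly the set of prefixes of u, and for all 1 ≤ j ≤ ℓ one has S(t_j^spn) ≤ (S(t) − v_j)/2. -/
import Mathlib


/-- Words over the alphabet {1,2}, encoded as lists of booleans (`false` = 1, `true` = 2). -/
abbrev Word := List Bool

/-- Longest common prefix of two words (`u ∧ v`). -/
def lcp : Word → Word → Word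
  | a :: as, b :: bs => if a = b then a :: lcp as bs else []
  | _, _ => []

/-- The lexicographic (strict) order on words; a strict prefix is smaller. -/
def wlex (u v : Word) : Prop := List.Lex (· < ·) u v

/-- A binary tree: a finite, prefix-closed set of words containing the empty word. -/
def IsBinaryTree (t : Set Word) : Prop :=
  t.Finite ∧ ([] : Word) ∈ t ∧ ∀ u ∈ t, ∀ v : Word, v <+: u → v ∈ t

/-- Fullness: each vertex has either zero or two children. -/
def IsFull (t : Set Word) : Prop :=
  ∀ u ∈ t, (u ++ [false] ∈ t ↔ u ++ [true] ∈ t)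

def IsFullBinaryTree (t : Set Word) : Prop := IsBinaryTree t ∧ IsFull t

/-- `φ` is an embedding of `t` into `t'`: injective on `t`, strictly increasing for the
lexicographic order, and preserving longest common prefixes. -/
def IsEmbedding (t t' : Set Word) (φ : Word → Word) : Prop :=
  (∀ u ∈ t, φ u ∈ t') ∧
  (∀ u ∈ t, ∀ v ∈ t, u ≠ v → φ u ≠ φ v) ∧
  (∀ u ∈ t, ∀ v ∈ t, wlex u v → wlex (φ u) (φ v)) ∧
  (∀ u ∈ t, ∀ v ∈ t, φ (lcp u v) = lcp (φ u) (φ v))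

/-- `t` can be embedded in `t'`. -/
def Embeds (t t' : Set Word) : Prop := ∃ φ, IsEmbedding t t' φ

/-- `graft b t = b · t`, the copy of `t` rooted at the child `b` of the root. -/
def graft (b : Bool) (t : Set Word) : Set Word := (fun w => b :: w) '' t

/-- The interpolating trees: τ₀ = {∅}, τ₁ = {∅,1,2},
τ_{2m} = {∅} ∪ 1·τ_m ∪ 2·τ_{m-1}, τ_{2m+1} = {∅} ∪ 1·τ_m ∪ 2·τ_m (for m ≥ 1). -/
def tau : ℕ → Set Word
  | 0 => {[]}
  | 1 => {[], [false], [true]}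
  | n + 2 => {[]} ∪ graft false (tau ((n + 2) / 2)) ∪ graft true (tau ((n + 1) / 2))
termination_by n => n
decreasing_by all_goals omega

/-- The subtree of `t` rooted at `u`: θ_u t = {v : uv ∈ t}. -/
def subtreeAt (u : Word) (t : Set Word) : Set Word := {v | u ++ v ∈ t}

/-- The refined Horton–Strahler number S(t) = max {r : τ_r embeds in t}. -/
noncomputable def RHS (t : Set Word) : ℕ := sSup {r | Embeds (tau r) t}

/-- S_u(t) = S(θ_u t). -/
noncomputable def Sv (u : Word) (t : Set Word) : ℕ := RHS (subtreeAt u t)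

/-- The set of internal vertices of `t` (those having a child in `t`). -/
def internals (t : Set Word) : Set Word :=
  {u | u ∈ t ∧ (u ++ [false] ∈ t ∨ u ++ [true] ∈ t)}


section Aux

/-! ### lcp lemmas -/

lemma lcp_nil_left (v : Word) : lcp [] v = [] := by cases v <;> rfl

lemma lcp_nil_right (u : Word) : lcp u [] = [] := by cases u <;> rfl

lemma lcp_cons (a b : Bool) (as bs : Word) :
    lcp (a :: as) (b :: bs) = if a = b then a :: lcp as bs else [] := rfl

lemma lcp_append (s x y : Word) : lcp (s ++ x) (s ++ y) = s ++ lcp x y := by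
  induction s with
  | nil => rfl
  | cons a s ih => simp [lcp_cons, ih]

/-! ### wlex lemmas -/

lemma wlex_append (s : Word) {x y : Word} (h : wlex x y) : wlex (s ++ x) (s ++ y) := by
  induction s with
  | nil => exact h
  | cons a s ih => exact List.Lex.cons ih

lemma wlex_asymm : ∀ {u v : Word}, wlex u v → ¬ wlex v u := by
  intro u v h
  induction h with
  | nil => intro h2; cases h2
  | @rel a l b m h =>
    intro h2
    cases h2 with
    | rel h' => exact absurd h' (lt_asymm h)
    | cons h' => exact absurd h (lt_irrefl _)
  | @cons a l m h ih =>
    intro h2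
    cases h2 with
    | rel h' => exact absurd h' (lt_irrefl _)
    | cons h' => exact ih h'

lemma wlex_append_right : ∀ (u : Word) {s : Word}, s ≠ [] → wlex u (u ++ s)
  | [], s, h => by
      cases s with
      | nil => exact absurd rfl h
      | cons b bs => exact List.Lex.nil
  | a :: as, s, h => List.Lex.cons (wlex_append_right as h)

lemma wlex_of_prefix_ne {u v : Word} (h : u <+: v) (hne : u ≠ v) : wlex u v := by
  obtain ⟨s, rfl⟩ := h
  apply wlex_append_right
  rintro rfl
  simp at hne

lemma prefix_or_fork : ∀ (u v : Word), u <+: v ∨ v <+: u ∨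
    ∃ a b, a ≠ b ∧ lcp u v ++ [a] <+: u ∧ lcp u v ++ [b] <+: v := by
  intro u
  induction u with
  | nil => intro v; exact Or.inl (List.nil_prefix)
  | cons a as ih =>
    intro v
    cases v with
    | nil => exact Or.inr (Or.inl (List.nil_prefix))
    | cons b bs =>
      by_cases hab : a = b
      · subst hab
        rcases ih bs with h | h | ⟨x, y, hxy, h1, h2⟩
        · exact Or.inl (List.cons_prefix_cons.mpr ⟨rfl, h⟩)
        · exact Or.inr (Or.inl (List.cons_prefix_cons.mpr ⟨rfl, h⟩))
        · refine Or.inr (Or.inr ⟨x, y, hxy, ?_, ?_⟩) <;>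
            simp only [lcp_cons, if_pos rfl, List.cons_append] <;>
            exact List.cons_prefix_cons.mpr ⟨rfl, by assumption⟩
      · refine Or.inr (Or.inr ⟨a, b, hab, ?_, ?_⟩) <;>
          simp [lcp_cons, hab, List.cons_prefix_cons]

/-! ### subtree lemmas -/

lemma mem_subtreeAt {t : Set Word} {u v : Word} : v ∈ subtreeAt u t ↔ u ++ v ∈ t := Iff.rfl

lemma subtreeAt_nil (t : Set Word) : subtreeAt [] t = t := by
  ext w; simp [subtreeAt]

lemma subtreeAt_append (p q : Word) (t : Set Word) :
    subtreeAt (p ++ q) t = subtreeAt q (subtreeAt p t) := by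
  ext w; simp [subtreeAt, List.append_assoc]

lemma subtree_finite {t : Set Word} (ht : t.Finite) (v : Word) : (subtreeAt v t).Finite := by
  have : subtreeAt v t = (fun w => v ++ w) ⁻¹' t := rfl
  rw [this]
  exact ht.preimage (Set.injOn_of_injective (fun _ _ h => List.append_cancel_left h))

lemma mem_graft {x : Word} {b : Bool} {A : Set Word} :
    x ∈ graft b A ↔ ∃ w ∈ A, x = b :: w := by
  simp [graft, eq_comm]

lemma subtree_graft_false (A B : Set Word) :
    subtreeAt [false] ({[]} ∪ graft false A ∪ graft true B) = A := by
  ext w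
  simp [subtreeAt, graft]

lemma subtree_graft_true (A B : Set Word) :
    subtreeAt [true] ({[]} ∪ graft false A ∪ graft true B) = B := by
  ext w
  simp [subtreeAt, graft]

/-! ### embedding basics -/

lemma embeds_refl (t : Set Word) : Embeds t t :=
  ⟨id, fun _ hu => hu, fun _ _ _ _ hne => hne, fun _ _ _ _ h => h, fun _ _ _ _ => rfl⟩

lemma embeds_trans {A B C : Set Word} (h1 : Embeds A B) (h2 : Embeds B C) : Embeds A C := by
  obtain ⟨φ, hφ1, hφ2, hφ3, hφ4⟩ := h1
  obtain ⟨ψ, hψ1, hψ2, hψ3, hψ4⟩ := h2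
  refine ⟨ψ ∘ φ, fun u hu => hψ1 _ (hφ1 u hu), ?_, ?_, ?_⟩
  · intro u hu v hv hne
    exact hψ2 _ (hφ1 u hu) _ (hφ1 v hv) (hφ2 u hu v hv hne)
  · intro u hu v hv h
    exact hψ3 _ (hφ1 u hu) _ (hφ1 v hv) (hφ3 u hu v hv h)
  · intro u hu v hv
    simp only [Function.comp_apply]
    rw [hφ4 u hu v hv, hψ4 _ (hφ1 u hu) _ (hφ1 v hv)]

lemma embeds_of_subtree {A t : Set Word} (s : Word) (h : Embeds A (subtreeAt s t)) :
    Embeds A t := by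
  obtain ⟨φ, h1, h2, h3, h4⟩ := h
  refine ⟨fun w => s ++ φ w, fun w hw => h1 w hw, ?_, ?_, ?_⟩
  · intro x hx y hy hne he
    exact h2 x hx y hy hne (List.append_cancel_left he)
  · intro x hx y hy h
    exact wlex_append s (h3 x hx y hy h)
  · intro x hx y hy
    show s ++ φ (lcp x y) = lcp (s ++ φ x) (s ++ φ y)
    rw [lcp_append, h4 x hx y hy]

/-! ### tau lemmas -/

lemma tau_succ : ∀ n : ℕ, tau (n + 1) = {[]} ∪ graft false (tau ((n + 1) / 2)) ∪ graft true (tau (n / 2))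
  | 0 => by
      show tau 1 = {[]} ∪ graft false (tau 0) ∪ graft true (tau 0)
      rw [tau, tau]
      ext w
      simp [graft]
      tauto
  | n + 1 => by rw [tau]

lemma nil_mem_tau (r : ℕ) : [] ∈ tau r := by
  cases r with
  | zero => rw [tau]; rfl
  | succ n => rw [tau_succ]; exact Or.inl (Or.inl rfl)

lemma tau_finite (r : ℕ) : (tau r).Finite := by
  induction r using Nat.strong_induction_on with
  | _ r ih =>
    match r with
    | 0 => rw [tau]; exact Set.finite_singleton _
    | 1 => rw [tau]; exact (Set.finite_singleton _).insert _ |>.insert _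
    | n + 2 =>
      rw [tau]
      exact ((Set.finite_singleton _).union ((ih _ (by omega)).image _)).union
        ((ih _ (by omega)).image _)

lemma graft_ncard (b : Bool) (A : Set Word) : (graft b A).ncard = A.ncard :=
  Set.ncard_image_of_injective _ List.cons_injective

lemma combined_ncard (A B : Set Word) (hA : A.Finite) (hB : B.Finite) :
    ({[]} ∪ graft false A ∪ graft true B : Set Word).ncard = 1 + A.ncard + B.ncard := by
  have d1 : Disjoint ({[]} : Set Word) (graft false A) := by
    rw [Set.disjoint_left]
    rintro x rfl hx
    rw [mem_graft] at hx
    obtain ⟨w, _, h⟩ := hx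
    simp at h
  have d2 : Disjoint ({[]} ∪ graft false A : Set Word) (graft true B) := by
    rw [Set.disjoint_left]
    rintro x (rfl | hx) hy <;> rw [mem_graft] at hy <;> obtain ⟨w, _, h⟩ := hy
    · simp at h
    · rw [mem_graft] at hx
      obtain ⟨w', _, h'⟩ := hx
      subst h
      simp at h'
  rw [Set.ncard_union_eq d2 (((Set.finite_singleton _).union (hA.image _)))
      (hB.image _),
    Set.ncard_union_eq d1 (Set.finite_singleton _) (hA.image _),
    graft_ncard, graft_ncard, Set.ncard_singleton]

lemma tau_ncard (r : ℕ) : r + 1 ≤ (tau r).ncard := by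
  induction r using Nat.strong_induction_on with
  | _ r ih =>
    match r with
    | 0 => rw [tau]; simp
    | n + 1 =>
      rw [tau_succ, combined_ncard _ _ (tau_finite _) (tau_finite _)]
      have h1 := ih ((n + 1) / 2) (by omega)
      have h2 := ih (n / 2) (by omega)
      omega

/-! ### the RHS sup -/

lemma embeds_tau_zero {t : Set Word} (h0 : [] ∈ t) : Embeds (tau 0) t := by
  have htau : ∀ u, u ∈ tau 0 → u = [] := by intro u hu; rw [tau] at hu; exact hu
  refine ⟨id, ?_, ?_, ?_, ?_⟩
  · intro u hu; rw [htau u hu]; exact h0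
  · intro u hu v hv hne; exact absurd ((htau u hu).trans (htau v hv).symm) hne
  · intro u hu v hv h
    rw [htau u hu, htau v hv] at h
    cases h
  · intro u hu v hv
    rw [htau u hu, htau v hv]
    rfl

lemma bdd_embeds {t : Set Word} (ht : t.Finite) : BddAbove {r | Embeds (tau r) t} := by
  refine ⟨t.ncard, fun r hr => ?_⟩
  obtain ⟨φ, h1, h2, _, _⟩ := hr
  have hinj : Set.InjOn φ (tau r) := by
    intro x hx y hy he
    by_contra hne
    exact h2 x hx y hy hne he
  have hcard : (tau r).ncard ≤ t.ncard := by
    calc (tau r).ncard = (φ '' tau r).ncard := (Set.ncard_image_of_injOn hinj).symm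
    _ ≤ t.ncard := Set.ncard_le_ncard (by rintro _ ⟨w, hw, rfl⟩; exact h1 w hw) ht
  have := tau_ncard r
  omega

lemma rhs_spec {t : Set Word} (ht : t.Finite) (h0 : [] ∈ t) : Embeds (tau (RHS t)) t := by
  have hne : {r | Embeds (tau r) t}.Nonempty := ⟨0, embeds_tau_zero h0⟩
  exact Nat.sSup_mem hne (bdd_embeds ht)

lemma le_rhs {t : Set Word} (ht : t.Finite) {r : ℕ} (h : Embeds (tau r) t) : r ≤ RHS t :=
  le_csSup (bdd_embeds ht) h

end Aux

section Comb

def combMap (f g : Word → Word) : Word → Word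
  | [] => []
  | false :: w => false :: f w
  | true :: w => true :: g w

@[simp] lemma combMap_nil (f g : Word → Word) : combMap f g [] = [] := rfl
@[simp] lemma combMap_false (f g : Word → Word) (w : Word) :
    combMap f g (false :: w) = false :: f w := rfl
@[simp] lemma combMap_true (f g : Word → Word) (w : Word) :
    combMap f g (true :: w) = true :: g w := rfl

lemma embeds_combine {A B t : Set Word} (h0 : [] ∈ t)
    (hA : Embeds A (subtreeAt [false] t)) (hB : Embeds B (subtreeAt [true] t)) :
    Embeds ({[]} ∪ graft false A ∪ graft true B) t := by
  obtain ⟨f, hf1, hf2, hf3, hf4⟩ := hA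
  obtain ⟨g, hg1, hg2, hg3, hg4⟩ := hB
  have memcase : ∀ u, u ∈ ({[]} ∪ graft false A ∪ graft true B : Set Word) →
      u = [] ∨ (∃ w ∈ A, u = false :: w) ∨ (∃ w ∈ B, u = true :: w) := by
    rintro u ((rfl | hu) | hu)
    · exact Or.inl rfl
    · exact Or.inr (Or.inl (mem_graft.mp hu))
    · exact Or.inr (Or.inr (mem_graft.mp hu))
  refine ⟨combMap f g, ?_, ?_, ?_, ?_⟩
  · intro u hu
    rcases memcase u hu with rfl | ⟨w, hw, rfl⟩ | ⟨w, hw, rfl⟩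
    · exact h0
    · exact hf1 w hw
    · exact hg1 w hw
  · intro u hu v hv hne
    rcases memcase u hu with rfl | ⟨x, hx, rfl⟩ | ⟨x, hx, rfl⟩ <;>
      rcases memcase v hv with rfl | ⟨y, hy, rfl⟩ | ⟨y, hy, rfl⟩ <;>
      simp only [combMap_nil, combMap_false, combMap_true, ne_eq, List.cons.injEq,
        true_and, false_and, not_false_eq_true, reduceCtorEq] <;>
      try trivial
    · exact hf2 x hx y hy (by rintro rfl; exact hne rfl)
    · exact hg2 x hx y hy (by rintro rfl; exact hne rfl)
  · intro u hu v hv h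
    rcases memcase u hu with rfl | ⟨x, hx, rfl⟩ | ⟨x, hx, rfl⟩ <;>
      rcases memcase v hv with rfl | ⟨y, hy, rfl⟩ | ⟨y, hy, rfl⟩
    · cases h
    · exact List.Lex.nil
    · exact List.Lex.nil
    · cases h
    · refine List.Lex.cons (hf3 x hx y hy ?_)
      cases h with
      | cons h' => exact h'
      | rel h' => exact absurd h' (lt_irrefl _)
    · exact List.Lex.rel (by decide)
    · cases h
    · cases h with
      | rel h' => exact absurd h' (by decide)
    · refine List.Lex.cons (hg3 x hx y hy ?_)
      cases h with
      | cons h' => exact h'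
      | rel h' => exact absurd h' (lt_irrefl _)
  · intro u hu v hv
    rcases memcase u hu with rfl | ⟨x, hx, rfl⟩ | ⟨x, hx, rfl⟩ <;>
      rcases memcase v hv with rfl | ⟨y, hy, rfl⟩ | ⟨y, hy, rfl⟩ <;>
      simp only [lcp_nil_left, lcp_nil_right, lcp_cons, if_pos rfl, combMap_nil,
        combMap_false, combMap_true, Bool.false_eq_true, Bool.true_eq_false,
        if_false, reduceIte]
    · rw [hf4 x hx y hy]
    · rw [hg4 x hx y hy]

lemma tau_mono : ∀ s r : ℕ, r ≤ s → Embeds (tau r) (tau s) := by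
  intro s
  induction s using Nat.strong_induction_on with
  | _ s ih =>
    intro r hr
    rcases Nat.eq_or_lt_of_le hr with rfl | hlt
    · exact embeds_refl _
    · obtain ⟨n, rfl⟩ : ∃ n, s = n + 1 := ⟨s - 1, by omega⟩
      cases r with
      | zero => exact embeds_tau_zero (nil_mem_tau _)
      | succ k =>
        rw [tau_succ, tau_succ]
        apply embeds_combine
        · exact Or.inl (Or.inl rfl)
        · rw [subtree_graft_false]
          exact ih ((n + 1) / 2) (by omega) ((k + 1) / 2) (Nat.div_le_div_right (by omega))
        · rw [subtree_graft_true]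
          exact ih (n / 2) (by omega) (k / 2) (Nat.div_le_div_right (by omega))

end Comb

section Main

lemma Sv_le_of_prefix {t : Set Word} (ht : t.Finite) {v w : Word} (h : v <+: w)
    (hw : w ∈ t) : Sv w t ≤ Sv v t := by
  obtain ⟨s, rfl⟩ := h
  apply csSup_le_csSup (bdd_embeds (subtree_finite ht v))
  · exact ⟨0, embeds_tau_zero (by simpa [mem_subtreeAt] using hw)⟩
  · intro r hr
    rw [Set.mem_setOf_eq, subtreeAt_append] at hr
    exact embeds_of_subtree s hr

lemma Sv_le_rhs {t : Set Word} (ht : t.Finite) {v : Word} (hv : v ∈ t) : Sv v t ≤ RHS t := by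
  have := Sv_le_of_prefix ht (List.nil_prefix) hv
  simpa [Sv, subtreeAt_nil] using this

lemma embeds_of_le_Sv {t : Set Word} (ht : t.Finite) {v : Word} {r : ℕ} (hv : v ∈ t)
    (h : r ≤ Sv v t) : Embeds (tau r) (subtreeAt v t) :=
  embeds_trans (tau_mono _ _ h)
    (rhs_spec (subtree_finite ht v) (by simpa [mem_subtreeAt] using hv))

lemma spine_lb {t : Set Word} (ht : t.Finite) {p : Word} (hp : p ∈ t) {r : ℕ}
    (hc0 : p ++ [false] ∈ t) (hc1 : p ++ [true] ∈ t)
    (ha : r / 2 ≤ Sv (p ++ [false]) t) (hb : (r - 1) / 2 ≤ Sv (p ++ [true]) t)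
    (hr : 1 ≤ r) : r ≤ Sv p t := by
  obtain ⟨n, rfl⟩ : ∃ n, r = n + 1 := ⟨r - 1, by omega⟩
  apply le_rhs (subtree_finite ht p)
  rw [tau_succ]
  apply embeds_combine
  · simpa [mem_subtreeAt] using hp
  · rw [← subtreeAt_append]
    exact embeds_of_le_Sv ht hc0 ha
  · rw [← subtreeAt_append]
    exact embeds_of_le_Sv ht hc1 (by simpa using hb)

end Main

theorem spinal_trees_bound' (t : Set Word) (u : Word)
    (ht : IsFullBinaryTree t) (hne : t ≠ {([] : Word)})
    (hu : u ∈ t) (humax : Sv u t = RHS t)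
    (hlexmax : ∀ w ∈ t, Sv w t = RHS t → w = u ∨ wlex w u) :
    (∀ v ∈ t, (Sv v t = RHS t ↔ v <+: u)) ∧
    (∀ j, ∀ hj : j < u.length,
      2 * Sv (u.take j ++ [! u.get ⟨j, hj⟩]) t +
        (bif u.get ⟨j, hj⟩ then 1 else 2) ≤ RHS t) := by
  obtain ⟨⟨htf, h0, hcl⟩, hfull⟩ := ht
  have prefix_max : ∀ v, v <+: u → Sv v t = RHS t := by
    intro v hv
    have hvt : v ∈ t := hcl u hu v hv
    have h1 : Sv u t ≤ Sv v t := Sv_le_of_prefix htf hv hu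
    have h2 : Sv v t ≤ RHS t := Sv_le_rhs htf hvt
    omega
  have fork_false : ∀ p, p ∈ t → p ++ [false] ∈ t → p ++ [true] ∈ t →
      Sv (p ++ [false]) t = RHS t → Sv (p ++ [true]) t = RHS t → False := by
    intro p hp hc0 hc1 e0 e1
    have hS := spine_lb (r := 2 * RHS t + 1) htf hp hc0 hc1 (by omega) (by omega) (by omega)
    have hple := Sv_le_rhs htf hp
    omega
  have part1 : ∀ v ∈ t, (Sv v t = RHS t ↔ v <+: u) := by
    intro v hv
    constructor
    · intro hSv
      rcases prefix_or_fork u v with h | h | ⟨a, b, hab, h1, h2⟩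
      · by_cases hvu : v = u
        · exact hvu ▸ List.prefix_refl _
        · have hlex : wlex u v := wlex_of_prefix_ne h (fun e => hvu e.symm)
          rcases hlexmax v hv hSv with rfl | h2
          · exact List.prefix_refl _
          · exact absurd h2 (wlex_asymm hlex)
      · exact h
      · exfalso
        have hau : lcp u v ++ [a] ∈ t := hcl u hu _ h1
        have hbv : lcp u v ++ [b] ∈ t := hcl v hv _ h2
        have hp : lcp u v ∈ t :=
          hcl u hu _ (List.IsPrefix.trans ⟨[a], rfl⟩ h1)
        have ea : Sv (lcp u v ++ [a]) t = RHS t := by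
          have e1 : Sv u t ≤ Sv (lcp u v ++ [a]) t := Sv_le_of_prefix htf h1 hu
          have e2 := Sv_le_rhs htf hau
          omega
        have eb : Sv (lcp u v ++ [b]) t = RHS t := by
          have e1 : Sv v t ≤ Sv (lcp u v ++ [b]) t := Sv_le_of_prefix htf h2 hv
          have e2 := Sv_le_rhs htf hbv
          omega
        cases a <;> cases b
        · exact hab rfl
        · exact fork_false _ hp hau hbv ea eb
        · exact fork_false _ hp hbv hau eb ea
        · exact hab rfl
    · exact prefix_max v
  refine ⟨part1, ?_⟩
  intro j hj
  have hp_pref : u.take j <+: u := List.take_prefix j u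
  have hpc : u.take j ++ [u.get ⟨j, hj⟩] <+: u := by
    have h : u.take (j + 1) = u.take j ++ [u.get ⟨j, hj⟩] := by
      rw [List.take_succ]
      congr 1
      simp [List.getElem?_eq_getElem hj]
    rw [← h]
    exact List.take_prefix _ u
  have hp : u.take j ∈ t := hcl u hu _ hp_pref
  have hct : u.take j ++ [u.get ⟨j, hj⟩] ∈ t := hcl u hu _ hpc
  have eC : Sv (u.take j ++ [u.get ⟨j, hj⟩]) t = RHS t := prefix_max _ hpc
  have eP : Sv (u.take j) t = RHS t := prefix_max _ hp_pref
  cases hc : u.get ⟨j, hj⟩ with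
  | true =>
    rw [hc] at hct eC
    have hsib : u.take j ++ [false] ∈ t := (hfull _ hp).mpr hct
    have hble := Sv_le_rhs htf hsib
    have := spine_lb (r := 2 * Sv (u.take j ++ [false]) t + 1) htf hp hsib hct
      (by omega) (by omega) (by omega)
    simp only [Bool.not_true, cond_true]
    omega
  | false =>
    rw [hc] at hct eC
    have hsib : u.take j ++ [true] ∈ t := (hfull _ hp).mp hct
    have hble := Sv_le_rhs htf hsib
    have hblt : Sv (u.take j ++ [true]) t ≠ RHS t := fun e =>
      fork_false _ hp hct hsib eC e
    have := spine_lb (r := 2 * Sv (u.take j ++ [true]) t + 2) htf hp hct hsib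
      (by omega) (by omega) (by omega)
    simp only [Bool.not_false, cond_false]
    omega

/-- For a full binary tree `t ≠ {∅}` with `u` the lexicographically maximal vertex satisfying
`S_u(t) = S(t)`: the set `{v ∈ t : S_v(t) = S(t)}` is exactly the set of prefixes of `u`, and
for each `1 ≤ j ≤ |u|`, `S(t_j^spn) ≤ (S(t) − v_j)/2`, i.e. `2·S(t_j^spn) + v_j ≤ S(t)`,
where `v_j = 3 − u_j` and `t_j^spn = θ_{u_1…u_{j−1} v_j} t`. -/
theorem spinal_trees_bound (t : Set Word) (u : Word)
    (ht : IsFullBinaryTree t) (hne : t ≠ {([] : Word)})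
    (hu : u ∈ t) (humax : Sv u t = RHS t)
    (hlexmax : ∀ w ∈ t, Sv w t = RHS t → w = u ∨ wlex w u) :
    (∀ v ∈ t, (Sv v t = RHS t ↔ v <+: u)) ∧
    (∀ j, ∀ hj : j < u.length,
      2 * Sv (u.take j ++ [! u.get ⟨j, hj⟩]) t +
        (bif u.get ⟨j, hj⟩ then 1 else 2) ≤ RHS t) := by
  exact spinal_trees_bound' t u ht hne hu humax hlexmax
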